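/- For every predictor class P ⊆ [0,1]^X, every distinguisher class D ⊆ [−1,1]^X, every distribution μ over X, every advantage bound ε ∈ (0,1), and every failure probability bound δ ∈ (0,1), there exist a positive integer n with n ≤ O( ε^{−2} ( log N_{μ,Q}(D, ε/2) + log(2/δ) ) ) ≤ O( ε^{−2} ( log N_{μ,P}(D, ε/4) + log(2/δ) ) ), where Q = P − P = {p₁ − p₂ : p₁, p₂ ∈ P}, and an n-sample learner such that for every target predictor p* ∈ [0,1]^X, given n i.i.d. examples from μ_{p*}, the learner outputs a predictor p ∈ P with ‖p − p*‖_{μ,D} ≤ 3·inf_{p'∈P} ‖p' − p*‖_{μ,D} + ε with probability at least 1 − δ. -/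

import Mathlib

/-!
Fix a minimal `ε/2`-cover `C` of `D` for `‖·‖_{μ,P-P}` and estimate every `⟨p*, c⟩_μ`, `c ∈ C`,
by the empirical mean of `o · c(x)`. By Hoeffding's inequality and a union bound, all `|C|`
estimates are `ε/8`-accurate with probability at least `1 - 2|C| exp(-nε²/128) ≥ 1 - δ`. The
learner outputs an approximate minimiser `p ∈ P` of `max_{c ∈ C} |⟨p, c⟩_μ - estimate(c)|`. For
`d ∈ D` with cover element `c` and any `p' ∈ P`, the advantage `⟨p - p*, d⟩_μ` splits as
`⟨p - p', d - c⟩_μ + ⟨p - p', c⟩_μ + ⟨p' - p*, d⟩_μ`: the first term is at most `ε/2` because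
`p - p' ∈ P - P`, the second is controlled through the estimates by `2‖p' - p*‖_{μ,D}` plus
slack, and the third by `‖p' - p*‖_{μ,D}`; hence the factor `3`. Finally
`N_{μ,P-P}(D, ε/2) ≤ N_{μ,P}(D, ε/4)` since `‖f‖_{μ,P-P} ≤ 2‖f‖_{μ,P}`.
-/

open scoped ENNReal Pointwise

noncomputable section

namespace OI

/-- Expectation of a real-valued function under a probability mass function. -/
def pexp {α : Type*} (q : PMF α) (f : α → ℝ) : ℝ := ∑' a, (q a).toReal * f a

/-- Inner product of two functions w.r.t. the distribution `μ`. -/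
def inn {X : Type*} (μ : PMF X) (f g : X → ℝ) : ℝ := pexp μ fun x => f x * g x

/-- Dual Minkowski (semi)norm of `f` w.r.t. the class `F`. -/
def dnorm {X : Type*} (μ : PMF X) (F : Set (X → ℝ)) (f : X → ℝ) : ℝ :=
  sSup ((fun g => |inn μ f g|) '' F)

/-- `C` is an ε-covering of `G` w.r.t. the seminorm defined by `F`. -/
def IsCover {X : Type*} (μ : PMF X) (F G : Set (X → ℝ)) (ε : ℝ) (C : Set (X → ℝ)) : Prop :=
  C ⊆ G ∧ ∀ g ∈ G, ∃ c ∈ C, dnorm μ F (g - c) ≤ ε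

/-- Covering number `N_{μ,F}(G, ε)` (`⊤` if no finite covering exists). -/
def covN {X : Type*} (μ : PMF X) (F G : Set (X → ℝ)) (ε : ℝ) : ℕ∞ :=
  ⨅ (C : Set (X → ℝ)) (_ : IsCover μ F G ε C), C.encard

/-- Base-2 logarithm of an extended natural number (junk value on `⊤`). -/
def elog2 (N : ℕ∞) : ℝ := Real.logb 2 (N.toNat : ℝ)

/-- Bernoulli distribution on `Bool` with mean (the truncation to `[0,1]` of) `r`. -/
def bern (r : ℝ) : PMF Bool := PMF.bernoulli (min (Real.toNNReal r) 1) (min_le_right _ _)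

/-- The distribution `μ_p` of individual-outcome pairs. -/
def exDist {X : Type*} (μ : PMF X) (p : X → ℝ) : PMF (X × Bool) :=
  μ.bind fun x => (bern (p x)).map fun o => (x, o)

/-- `n` i.i.d. samples from `q`. -/
def iid {α : Type*} (q : PMF α) : (n : ℕ) → PMF (Fin n → α)
  | 0 => PMF.pure Fin.elim0
  | n + 1 => (iid q n).bind fun v => q.map fun a => Fin.cons a v

/-- Probability of an event under a PMF. -/
def prob {α : Type*} (q : PMF α) (E : Set α) : ℝ≥0∞ := q.toOuterMeasure E

/-- A (possibly randomized) `n`-sample learner. -/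
abbrev Learner (X : Type*) (n : ℕ) := (Fin n → X × Bool) → PMF (X → ℝ)

/-- Distribution of the learner output on `n` i.i.d. samples from `μ_{p*}`. -/
def outDist {X : Type*} (μ : PMF X) (pstar : X → ℝ) {n : ℕ} (A : Learner X n) :
    PMF (X → ℝ) :=
  (iid (exDist μ pstar) n).bind A

/-- `p` is a predictor, i.e. takes values in `[0,1]`. -/
def Predictor {X : Type*} (p : X → ℝ) : Prop := ∀ x, p x ∈ Set.Icc (0 : ℝ) 1

/-- `d` takes values in `[-1,1]`. -/
def Dist1 {X : Type*} (d : X → ℝ) : Prop := ∀ x, d x ∈ Set.Icc (-1 : ℝ) 1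

/-- The class `[0,1]^X` of all predictors. -/
def allPred (X : Type*) : Set (X → ℝ) := {p | Predictor p}

/-- The learner `A` succeeds for target `pstar`: with probability at least `1 - δ` it outputs
a predictor whose maximum distinguishing advantage w.r.t. `pstar` over `D` is at most `ε`. -/
def Achieves {X : Type*} (μ : PMF X) (D : Set (X → ℝ)) (ε δ : ℝ) (pstar : X → ℝ) {n : ℕ}
    (A : Learner X n) : Prop :=
  ENNReal.ofReal (1 - δ) ≤
    prob (outDist μ pstar A) {p | Predictor p ∧ dnorm μ D (p - pstar) ≤ ε}

/-- The agnostic benchmark `inf_{p' ∈ P} ‖p' - pstar‖_{μ,D}`. -/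
def agTarget {X : Type*} (μ : PMF X) (P D : Set (X → ℝ)) (pstar : X → ℝ) : ℝ :=
  sInf ((fun p' => dnorm μ D (p' - pstar)) '' P)

/-- The learner `A` succeeds agnostically for target `pstar`. -/
def AchievesAg {X : Type*} (μ : PMF X) (P D : Set (X → ℝ)) (ε δ : ℝ) (pstar : X → ℝ) {n : ℕ}
    (A : Learner X n) : Prop :=
  ENNReal.ofReal (1 - δ) ≤
    prob (outDist μ pstar A)
      {p | Predictor p ∧ dnorm μ D (p - pstar) ≤ agTarget μ P D pstar + ε}

/-- Distribution-specific realizable OI learner. -/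
def DSRL {X : Type*} (μ : PMF X) (P D : Set (X → ℝ)) (ε δ : ℝ) (n : ℕ)
    (A : Learner X n) : Prop :=
  ∀ pstar ∈ P, Achieves μ D ε δ pstar A

/-- Distribution-specific agnostic OI learner. -/
def DSAL {X : Type*} (μ : PMF X) (P D : Set (X → ℝ)) (ε δ : ℝ) (n : ℕ)
    (A : Learner X n) : Prop :=
  ∀ pstar : X → ℝ, Predictor pstar → AchievesAg μ P D ε δ pstar A

/-- Distribution-free realizable OI learner. -/
def DFRL {X : Type*} (P D : Set (X → ℝ)) (ε δ : ℝ) (n : ℕ) (A : Learner X n) : Prop :=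
  ∀ μ : PMF X, DSRL μ P D ε δ n A

/-- Distribution-free agnostic OI learner. -/
def DFAL {X : Type*} (P D : Set (X → ℝ)) (ε δ : ℝ) (n : ℕ) (A : Learner X n) : Prop :=
  ∀ μ : PMF X, DSAL μ P D ε δ n A

/-- Sample complexity of distribution-specific realizable OI. -/
def SAMPDSR {X : Type*} (μ : PMF X) (P D : Set (X → ℝ)) (ε δ : ℝ) : ℕ∞ :=
  ⨅ (n : ℕ) (_ : ∃ A : Learner X n, DSRL μ P D ε δ n A), (n : ℕ∞)

/-- Sample complexity of distribution-specific agnostic OI. -/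
def SAMPDSA {X : Type*} (μ : PMF X) (P D : Set (X → ℝ)) (ε δ : ℝ) : ℕ∞ :=
  ⨅ (n : ℕ) (_ : ∃ A : Learner X n, DSAL μ P D ε δ n A), (n : ℕ∞)

/-- Sample complexity of distribution-free realizable OI. -/
def SAMPDFR {X : Type*} (P D : Set (X → ℝ)) (ε δ : ℝ) : ℕ∞ :=
  ⨅ (n : ℕ) (_ : ∃ A : Learner X n, DFRL P D ε δ n A), (n : ℕ∞)

/-- Sample complexity of distribution-free agnostic OI. -/
def SAMPDFA {X : Type*} (P D : Set (X → ℝ)) (ε δ : ℝ) : ℕ∞ :=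
  ⨅ (n : ℕ) (_ : ∃ A : Learner X n, DFAL P D ε δ n A), (n : ℕ∞)

/-- The points `x 0, …, x (n-1)` are `γ`-fat shattered by `F`. -/
def Shatters {X : Type*} (F : Set (X → ℝ)) (γ : ℝ) {n : ℕ} (x : Fin n → X) : Prop :=
  ∃ r : Fin n → ℝ, ∀ b : Fin n → Bool, ∃ f ∈ F,
    ∀ i, γ ≤ (if b i then (1 : ℝ) else -1) * (f (x i) - r i)

/-- The `γ`-fat-shattering dimension of `F`. -/
def fatDim {X : Type*} (F : Set (X → ℝ)) (γ : ℝ) : ℕ∞ :=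
  ⨆ (n : ℕ) (_ : ∃ x : Fin n → X, Shatters F γ x), (n : ℕ∞)

end OI


open OI

namespace OI

section Expectation

variable {α β : Type*}

def BddFun (f : α → ℝ) : Prop := ∃ B, ∀ a, |f a| ≤ B

lemma BddFun.of_abs_le {f : α → ℝ} {B : ℝ} (h : ∀ a, |f a| ≤ B) : BddFun f := ⟨B, h⟩

lemma BddFun.sub {f g : α → ℝ} (hf : BddFun f) (hg : BddFun g) : BddFun (f - g) := by
  obtain ⟨A, hA⟩ := hf
  obtain ⟨B, hB⟩ := hg
  exact ⟨A + B, fun a => (abs_sub _ _).trans (add_le_add (hA a) (hB a))⟩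

lemma BddFun.mul {f g : α → ℝ} (hf : BddFun f) (hg : BddFun g) : BddFun (f * g) := by
  obtain ⟨A, hA⟩ := hf
  obtain ⟨B, hB⟩ := hg
  refine ⟨A * B, fun a => ?_⟩
  rw [Pi.mul_apply, abs_mul]
  exact mul_le_mul (hA a) (hB a) (abs_nonneg _) ((abs_nonneg _).trans (hA a))

lemma BddFun.of_mem_Icc {f : α → ℝ} {a b : ℝ} (hf : ∀ x, f x ∈ Set.Icc a b) : BddFun f :=
  .of_abs_le fun x => abs_le_max_abs_abs (hf x).1 (hf x).2

lemma BddFun.exp_comp {f : α → ℝ} (hf : BddFun f) : BddFun fun x => Real.exp (f x) := by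
  obtain ⟨B, hB⟩ := hf
  refine .of_abs_le (B := Real.exp B) fun x => ?_
  rw [abs_of_pos (Real.exp_pos _)]
  exact Real.exp_le_exp.2 ((le_abs_self _).trans (hB x))

lemma summable_toReal_mul (q : PMF α) {f : α → ℝ} (hf : BddFun f) :
    Summable fun a => (q a).toReal * f a := by
  obtain ⟨B, hB⟩ := hf
  refine Summable.of_norm_bounded (ENNReal.summable_toReal q.tsum_coe_ne_top |>.mul_right B)
    fun a => ?_
  rw [Real.norm_eq_abs, abs_mul, abs_of_nonneg ENNReal.toReal_nonneg]
  exact mul_le_mul_of_nonneg_left (hB a) ENNReal.toReal_nonneg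

lemma tsum_toReal_apply (q : PMF α) : ∑' a, (q a).toReal = 1 := by
  rw [← ENNReal.tsum_toReal_eq q.apply_ne_top, q.tsum_coe, ENNReal.toReal_one]

lemma pexp_const (q : PMF α) (c : ℝ) : pexp q (fun _ => c) = c := by
  rw [pexp, tsum_mul_right, tsum_toReal_apply, one_mul]

lemma pexp_sub (q : PMF α) {f g : α → ℝ} (hf : BddFun f) (hg : BddFun g) :
    pexp q (f - g) = pexp q f - pexp q g := by
  simp only [pexp, Pi.sub_apply, mul_sub]
  exact (summable_toReal_mul q hf).tsum_sub (summable_toReal_mul q hg)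

lemma pexp_add_const (q : PMF α) {f : α → ℝ} (hf : BddFun f) (c : ℝ) :
    pexp q (fun a => f a + c) = pexp q f + c := by
  simp only [pexp, mul_add]
  rw [(summable_toReal_mul q hf).tsum_add (summable_toReal_mul q (.of_abs_le fun _ => le_rfl)),
    ← pexp, ← pexp, pexp_const]

lemma pexp_neg (q : PMF α) (f : α → ℝ) : pexp q (-f) = -pexp q f := by
  simp only [pexp, Pi.neg_apply, mul_neg, tsum_neg]

lemma abs_pexp_le (q : PMF α) {f : α → ℝ} {B : ℝ} (hf : ∀ a, |f a| ≤ B) : |pexp q f| ≤ B := by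
  have hs := summable_toReal_mul q (.of_abs_le hf)
  calc |pexp q f| ≤ ∑' a, |(q a).toReal * f a| := by
        simpa only [pexp, Real.norm_eq_abs] using norm_tsum_le_tsum_norm hs.norm
    _ ≤ ∑' a, (q a).toReal * B := by
        refine hs.abs.tsum_le_tsum (fun a => ?_)
          ((ENNReal.summable_toReal q.tsum_coe_ne_top).mul_right B)
        rw [abs_mul, abs_of_nonneg ENNReal.toReal_nonneg]
        exact mul_le_mul_of_nonneg_left (hf a) ENNReal.toReal_nonneg
    _ = B := by rw [tsum_mul_right, tsum_toReal_apply, one_mul]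

lemma pexp_pure (a : α) (f : α → ℝ) : pexp (PMF.pure a) f = f a := by
  rw [pexp, tsum_eq_single a fun b hb => by simp [PMF.pure_apply, hb]]
  simp

-- Expectations of `ℝ≥0∞`-valued functions need no summability side conditions.
def lexp (q : PMF α) (f : α → ℝ≥0∞) : ℝ≥0∞ := ∑' a, q a * f a

lemma lexp_pure (a : α) (f : α → ℝ≥0∞) : lexp (PMF.pure a) f = f a := by
  rw [lexp, tsum_eq_single a fun b hb => by simp [PMF.pure_apply, hb]]
  simp

lemma lexp_bind (q : PMF α) (k : α → PMF β) (f : β → ℝ≥0∞) :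
    lexp (q.bind k) f = lexp q fun a => lexp (k a) f := by
  simp only [lexp, PMF.bind_apply, ← ENNReal.tsum_mul_right, ← ENNReal.tsum_mul_left, mul_assoc]
  exact ENNReal.tsum_comm

lemma lexp_map (q : PMF α) (g : α → β) (f : β → ℝ≥0∞) :
    lexp (q.map g) f = lexp q (f ∘ g) := by
  simp only [PMF.map, lexp_bind, Function.comp_apply, lexp_pure]
  rfl

lemma lexp_const_mul (q : PMF α) (c : ℝ≥0∞) (f : α → ℝ≥0∞) :
    lexp q (fun a => c * f a) = c * lexp q f := by
  simp only [lexp, ← ENNReal.tsum_mul_left, mul_left_comm]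

lemma lexp_ofReal (q : PMF α) {f : α → ℝ} (hf : BddFun f) (hf0 : ∀ a, 0 ≤ f a) :
    lexp q (fun a => ENNReal.ofReal (f a)) = ENNReal.ofReal (pexp q f) := by
  rw [pexp, ENNReal.ofReal_tsum_of_nonneg (fun a => mul_nonneg ENNReal.toReal_nonneg (hf0 a))
    (summable_toReal_mul q hf)]
  simp only [lexp, ENNReal.ofReal_mul ENNReal.toReal_nonneg,
    ENNReal.ofReal_toReal (q.apply_ne_top _)]

lemma ofReal_pexp_add (q : PMF α) {f : α → ℝ} {B : ℝ} (hf : ∀ a, |f a| ≤ B) :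
    ENNReal.ofReal (pexp q f + B) = lexp q fun a => ENNReal.ofReal (f a + B) := by
  rw [lexp_ofReal q (.of_abs_le fun a => (abs_add_le _ _).trans (add_le_add (hf a) le_rfl))
    fun a => by linarith [neg_abs_le (f a), hf a], pexp_add_const q (.of_abs_le hf)]

lemma pexp_add_nonneg (q : PMF α) {f : α → ℝ} {B : ℝ} (hf : ∀ a, |f a| ≤ B) :
    0 ≤ pexp q f + B := by
  linarith [neg_abs_le (pexp q f), abs_pexp_le q hf]

/-- Proved through `lexp`, where Tonelli makes the interchange of sums free. -/
lemma pexp_bind (q : PMF α) (k : α → PMF β) {f : β → ℝ} {B : ℝ} (hf : ∀ b, |f b| ≤ B) :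
    pexp (q.bind k) f = pexp q fun a => pexp (k a) f := by
  have hk : ∀ a, |pexp (k a) f| ≤ B := fun a => abs_pexp_le _ hf
  have key : ENNReal.ofReal (pexp (q.bind k) f + B) =
      ENNReal.ofReal (pexp q (fun a => pexp (k a) f) + B) := by
    rw [ofReal_pexp_add _ hf, lexp_bind, ofReal_pexp_add q hk]
    simp only [ofReal_pexp_add _ hf]
  rw [ENNReal.ofReal_eq_ofReal_iff (pexp_add_nonneg _ hf) (pexp_add_nonneg _ hk)] at key
  linarith

lemma pexp_map (q : PMF α) (g : α → β) {f : β → ℝ} {B : ℝ} (hf : ∀ b, |f b| ≤ B) :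
    pexp (q.map g) f = pexp q (f ∘ g) := by
  simp only [PMF.map, pexp_bind q _ hf, Function.comp_apply, pexp_pure]
  rfl

end Expectation

section Probability

variable {α : Type*}

lemma prob_mono (q : PMF α) {S T : Set α} (h : S ⊆ T) : prob q S ≤ prob q T :=
  MeasureTheory.measure_mono h

lemma prob_union_le (q : PMF α) (S T : Set α) : prob q (S ∪ T) ≤ prob q S + prob q T :=
  MeasureTheory.measure_union_le S T

lemma prob_biUnion_finset_le {ι : Type*} (q : PMF α) (I : Finset ι) (S : ι → Set α) :
    prob q (⋃ i ∈ I, S i) ≤ ∑ i ∈ I, prob q (S i) :=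
  MeasureTheory.measure_biUnion_finset_le I S

lemma prob_map {β : Type*} (q : PMF α) (f : α → β) (S : Set β) :
    prob (q.map f) S = prob q (f ⁻¹' S) :=
  PMF.toOuterMeasure_map_apply f q S

lemma mul_prob_ge_le_lexp (q : PMF α) (f : α → ℝ≥0∞) (c : ℝ≥0∞) :
    c * prob q {a | c ≤ f a} ≤ lexp q f := by
  rw [prob, PMF.toOuterMeasure_apply, ← ENNReal.tsum_mul_left]
  refine ENNReal.tsum_le_tsum fun a => ?_
  by_cases h : c ≤ f a
  · rw [Set.indicator_of_mem (show a ∈ {a | c ≤ f a} from h), mul_comm]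
    exact mul_le_mul_right h _
  · rw [Set.indicator_of_notMem (show a ∉ {a | c ≤ f a} from h), mul_zero]
    exact zero_le

lemma ofReal_one_sub_le_prob (q : PMF α) {S : Set α} {δ : ℝ} (hδ : 0 ≤ δ)
    (h : prob q Sᶜ ≤ ENNReal.ofReal δ) : ENNReal.ofReal (1 - δ) ≤ prob q S := by
  have hcover : 1 ≤ prob q S + prob q Sᶜ := by
    rw [← (PMF.toOuterMeasure_apply_eq_one_iff q Set.univ).2 (Set.subset_univ _),
      ← Set.union_compl_self S]
    exact prob_union_le q S Sᶜ
  rw [ENNReal.ofReal_sub 1 hδ, ENNReal.ofReal_one, tsub_le_iff_right]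
  exact hcover.trans (add_le_add le_rfl h)

lemma lexp_iid_prod (q : PMF α) (g : α → ℝ≥0∞) (n : ℕ) :
    lexp (iid q n) (fun s => ∏ i, g (s i)) = lexp q g ^ n := by
  induction n with
  | zero => simp [iid, lexp_pure]
  | succ n ih =>
    simp only [iid, lexp_bind, lexp_map, Function.comp_def, Fin.prod_univ_succ, Fin.cons_zero,
      Fin.cons_succ]
    simp_rw [mul_comm (g _), lexp_const_mul, mul_comm _ (lexp q g), lexp_const_mul, ih,
      pow_succ']

end Probability

section Hoeffding

variable {α : Type*}

/-- Hoeffding's lemma, transported from `q.toMeasure` for the discrete σ-algebra. -/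
lemma lexp_exp_mul_sub_pexp_le (q : PMF α) {h : α → ℝ} {a b : ℝ}
    (hh : ∀ x, h x ∈ Set.Icc a b) (t : ℝ) :
    lexp q (fun x => ENNReal.ofReal (Real.exp (t * (h x - pexp q h)))) ≤
      ENNReal.ofReal (Real.exp ((b - a) ^ 2 / 8 * t ^ 2)) := by
  let _ : MeasurableSpace α := ⊤
  have hmeas : AEMeasurable h q.toMeasure := measurable_from_top.aemeasurable
  have hb : ∀ᵐ x ∂q.toMeasure, h x ∈ Set.Icc a b := MeasureTheory.ae_of_all _ hh
  have hsg := ProbabilityTheory.hasSubgaussianMGF_of_mem_Icc hmeas hb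
  have hmean : ∫ x, h x ∂q.toMeasure = pexp q h :=
    PMF.integral_eq_tsum _ _ (MeasureTheory.Integrable.of_mem_Icc a b hmeas hb)
  have hmgf := hsg.mgf_le t
  rw [ProbabilityTheory.mgf, PMF.integral_eq_tsum _ _ (hsg.integrable_exp_mul t), hmean] at hmgf
  have hbdd : BddFun fun x => Real.exp (t * (h x - pexp q h)) :=
    BddFun.exp_comp (((BddFun.of_abs_le fun _ => le_rfl).mul
      ((BddFun.of_mem_Icc hh).sub (.of_abs_le fun _ => le_rfl))))
  rw [lexp_ofReal q hbdd fun x => (Real.exp_pos _).le]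
  refine ENNReal.ofReal_le_ofReal (hmgf.trans_eq ?_)
  congr 1
  push_cast
  rw [Real.norm_eq_abs, div_pow, sq_abs]
  ring

lemma prob_iid_le_sum_le (q : PMF α) (g : α → ℝ) {t : ℝ} (ht : 0 ≤ t) (r : ℝ) (n : ℕ) :
    prob (iid q n) {s | r ≤ ∑ i, g (s i)} ≤
      ENNReal.ofReal (Real.exp (-(t * r))) *
        lexp q (fun x => ENNReal.ofReal (Real.exp (t * g x))) ^ n := by
  set S := {s : Fin n → α | r ≤ ∑ i, g (s i)}
  have hsub : S ⊆ {s | ENNReal.ofReal (Real.exp (t * r)) ≤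
      ∏ i, ENNReal.ofReal (Real.exp (t * g (s i)))} := fun s hs => by
    rw [Set.mem_ofPred_eq, ← ENNReal.ofReal_prod_of_nonneg fun i _ => (Real.exp_pos _).le,
      ← Real.exp_sum, ← Finset.mul_sum]
    exact ENNReal.ofReal_le_ofReal (Real.exp_le_exp.2 (mul_le_mul_of_nonneg_left hs ht))
  have hmarkov : ENNReal.ofReal (Real.exp (t * r)) * prob (iid q n) S ≤
      lexp q (fun x => ENNReal.ofReal (Real.exp (t * g x))) ^ n :=
    (mul_le_mul_right (prob_mono _ hsub) _).trans
      ((mul_prob_ge_le_lexp _ _ _).trans_eq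
        (lexp_iid_prod q (fun x => ENNReal.ofReal (Real.exp (t * g x))) n))
  calc prob (iid q n) S
      = ENNReal.ofReal (Real.exp (-(t * r))) *
          (ENNReal.ofReal (Real.exp (t * r)) * prob (iid q n) S) := by
        rw [← mul_assoc, ← ENNReal.ofReal_mul (Real.exp_pos _).le, ← Real.exp_add, neg_add_cancel,
          Real.exp_zero, ENNReal.ofReal_one, one_mul]
    _ ≤ _ := mul_le_mul_right hmarkov _

lemma prob_iid_sum_sub_ge_le (q : PMF α) {h : α → ℝ} {a b : ℝ} (hh : ∀ x, h x ∈ Set.Icc a b)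
    (hab : a < b) {ε : ℝ} (hε : 0 ≤ ε) (n : ℕ) :
    prob (iid q n) {s | n * ε ≤ ∑ i, (h (s i) - pexp q h)} ≤
      ENNReal.ofReal (Real.exp (-2 * n * ε ^ 2 / (b - a) ^ 2)) := by
  have hba : (b - a) ^ 2 ≠ 0 := by have := sub_pos.2 hab; positivity
  -- `t = 4ε / (b - a)²` minimises the Chernoff exponent `(b - a)² t² / 8 - t ε`
  have ht : 0 ≤ 4 * ε / (b - a) ^ 2 := by positivity
  calc _ ≤ _ := prob_iid_le_sum_le q (fun x => h x - pexp q h) ht (n * ε) n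
    _ ≤ ENNReal.ofReal (Real.exp (-(4 * ε / (b - a) ^ 2 * (n * ε)))) *
          ENNReal.ofReal (Real.exp ((b - a) ^ 2 / 8 * (4 * ε / (b - a) ^ 2) ^ 2)) ^ n :=
      mul_le_mul_right (pow_le_pow_left' (lexp_exp_mul_sub_pexp_le q hh _) n) _
    _ = _ := by
      rw [← ENNReal.ofReal_pow (Real.exp_pos _).le, ← Real.exp_nat_mul,
        ← ENNReal.ofReal_mul (Real.exp_pos _).le, ← Real.exp_add]
      congr 2
      field_simp
      ring

lemma prob_iid_abs_sum_sub_ge_le (q : PMF α) {h : α → ℝ} {a b : ℝ}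
    (hh : ∀ x, h x ∈ Set.Icc a b) (hab : a < b) {ε : ℝ} (hε : 0 ≤ ε) (n : ℕ) :
    prob (iid q n) {s | n * ε ≤ |∑ i, h (s i) - n * pexp q h|} ≤
      2 * ENNReal.ofReal (Real.exp (-2 * n * ε ^ 2 / (b - a) ^ 2)) := by
  have hneg : ∀ x, (-h) x ∈ Set.Icc (-b) (-a) := fun x => ⟨neg_le_neg (hh x).2, neg_le_neg (hh x).1⟩
  have hsplit : {s : Fin n → α | n * ε ≤ |∑ i, h (s i) - n * pexp q h|} ⊆
      {s | n * ε ≤ ∑ i, (h (s i) - pexp q h)} ∪ {s | n * ε ≤ ∑ i, ((-h) (s i) - pexp q (-h))} := by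
    intro s hs
    simp only [Set.mem_ofPred_eq, le_abs, Set.mem_union, pexp_neg, Pi.neg_apply,
      Finset.sum_sub_distrib, Finset.sum_neg_distrib, Finset.sum_const, Finset.card_univ,
      Fintype.card_fin, nsmul_eq_mul] at hs ⊢
    rcases hs with hs | hs
    · exact Or.inl hs
    · exact Or.inr (by linarith)
  calc _ ≤ _ := prob_mono _ hsplit
    _ ≤ _ := prob_union_le _ _ _
    _ ≤ _ := by
      rw [two_mul]
      refine add_le_add (prob_iid_sum_sub_ge_le q hh hab hε n) ?_
      simpa only [neg_sub_neg] using prob_iid_sum_sub_ge_le q hneg (neg_lt_neg hab) hε n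

end Hoeffding

section DualNorm

variable {X : Type*} (μ : PMF X)

lemma Predictor.abs_le_one {p : X → ℝ} (hp : Predictor p) (x : X) : |p x| ≤ 1 :=
  abs_le.2 ⟨by linarith [(hp x).1], (hp x).2⟩

lemma Dist1.abs_le_one {d : X → ℝ} (hd : Dist1 d) (x : X) : |d x| ≤ 1 :=
  abs_le.2 (hd x)

lemma abs_sub_apply_le {f g : X → ℝ} {A B : ℝ} (hf : ∀ x, |f x| ≤ A) (hg : ∀ x, |g x| ≤ B)
    (x : X) : |(f - g) x| ≤ A + B :=
  (abs_sub _ _).trans (add_le_add (hf x) (hg x))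

lemma inn_comm (f g : X → ℝ) : inn μ f g = inn μ g f := by
  simp only [inn, mul_comm]

lemma inn_sub_left {f₁ f₂ g : X → ℝ} (hf₁ : BddFun f₁) (hf₂ : BddFun f₂) (hg : BddFun g) :
    inn μ (f₁ - f₂) g = inn μ f₁ g - inn μ f₂ g := by
  simp only [inn, Pi.sub_apply, sub_mul]
  exact pexp_sub μ (hf₁.mul hg) (hf₂.mul hg)

lemma inn_sub_right {f g₁ g₂ : X → ℝ} (hf : BddFun f) (hg₁ : BddFun g₁) (hg₂ : BddFun g₂) :
    inn μ f (g₁ - g₂) = inn μ f g₁ - inn μ f g₂ := by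
  rw [inn_comm, inn_sub_left μ hg₁ hg₂ hf, inn_comm, inn_comm μ g₂]

lemma abs_inn_le {f g : X → ℝ} {A B : ℝ} (hf : ∀ x, |f x| ≤ A) (hg : ∀ x, |g x| ≤ B) :
    |inn μ f g| ≤ A * B :=
  abs_pexp_le μ fun x => by
    rw [abs_mul]
    exact mul_le_mul (hf x) (hg x) (abs_nonneg _) ((abs_nonneg _).trans (hf x))

lemma abs_inn_le_dnorm {F : Set (X → ℝ)} {f g : X → ℝ} {A B : ℝ} (hf : ∀ x, |f x| ≤ A)
    (hF : ∀ g ∈ F, ∀ x, |g x| ≤ B) (hg : g ∈ F) : |inn μ f g| ≤ dnorm μ F f :=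
  le_csSup ⟨A * B, Set.forall_mem_image.2 fun g hg => abs_inn_le μ hf (hF g hg)⟩
    (Set.mem_image_of_mem _ hg)

lemma abs_inn_sub_inn_le_dnorm {F : Set (X → ℝ)} {f₁ f₂ g : X → ℝ} {A₁ A₂ B : ℝ}
    (hf₁ : ∀ x, |f₁ x| ≤ A₁) (hf₂ : ∀ x, |f₂ x| ≤ A₂) (hF : ∀ g ∈ F, ∀ x, |g x| ≤ B)
    (hg : g ∈ F) : |inn μ f₁ g - inn μ f₂ g| ≤ dnorm μ F (f₁ - f₂) := by
  rw [← inn_sub_left μ (.of_abs_le hf₁) (.of_abs_le hf₂) (.of_abs_le (hF g hg))]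
  exact abs_inn_le_dnorm μ (abs_sub_apply_le hf₁ hf₂) hF hg

lemma abs_inn_sub_inn_sub_le_dnorm_sub {P : Set (X → ℝ)} {B : ℝ}
    (hP : ∀ p ∈ P, ∀ x, |p x| ≤ B) {p p' d c : X → ℝ} (hp : p ∈ P) (hp' : p' ∈ P)
    {A₁ A₂ : ℝ} (hd : ∀ x, |d x| ≤ A₁) (hc : ∀ x, |c x| ≤ A₂) :
    |inn μ p d - inn μ p' d - (inn μ p c - inn μ p' c)| ≤ dnorm μ (P - P) (d - c) := by
  have hPP : ∀ g ∈ P - P, ∀ x, |g x| ≤ B + B := by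
    rintro _ ⟨p₁, hp₁, p₂, hp₂, rfl⟩
    exact abs_sub_apply_le (hP p₁ hp₁) (hP p₂ hp₂)
  have key := abs_inn_sub_inn_le_dnorm μ hd hc hPP (Set.sub_mem_sub hp hp')
  rwa [inn_sub_right μ (.of_abs_le hd) (.of_abs_le (hP p hp)) (.of_abs_le (hP p' hp')),
    inn_sub_right μ (.of_abs_le hc) (.of_abs_le (hP p hp)) (.of_abs_le (hP p' hp')),
    inn_comm μ d p, inn_comm μ d p', inn_comm μ c p, inn_comm μ c p'] at key

lemma dnorm_le {F : Set (X → ℝ)} (hF : F.Nonempty) {f : X → ℝ} {b : ℝ}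
    (h : ∀ g ∈ F, |inn μ f g| ≤ b) : dnorm μ F f ≤ b :=
  csSup_le (hF.image _) (Set.forall_mem_image.2 h)

lemma dnorm_sub_self_le {P : Set (X → ℝ)} (hPne : P.Nonempty) {A B : ℝ}
    (hP : ∀ p ∈ P, ∀ x, |p x| ≤ B) {f : X → ℝ} (hf : ∀ x, |f x| ≤ A) :
    dnorm μ (P - P) f ≤ 2 * dnorm μ P f := by
  refine dnorm_le μ (hPne.sub hPne) ?_
  rintro _ ⟨p₁, hp₁, p₂, hp₂, rfl⟩
  rw [inn_sub_right μ (.of_abs_le hf) (.of_abs_le (hP p₁ hp₁)) (.of_abs_le (hP p₂ hp₂))]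
  linarith [abs_sub (inn μ f p₁) (inn μ f p₂), abs_inn_le_dnorm μ hf hP hp₁,
    abs_inn_le_dnorm μ hf hP hp₂]

lemma IsCover.sub_self {P D C : Set (X → ℝ)} {γ : ℝ} (hC : IsCover μ P D γ C)
    (hPne : P.Nonempty) {A B : ℝ} (hP : ∀ p ∈ P, ∀ x, |p x| ≤ A)
    (hD : ∀ d ∈ D, ∀ x, |d x| ≤ B) : IsCover μ (P - P) D (2 * γ) C := by
  refine ⟨hC.1, fun d hd => ?_⟩
  obtain ⟨c, hcC, hc⟩ := hC.2 d hd
  exact ⟨c, hcC, (dnorm_sub_self_le μ hPne hP (abs_sub_apply_le (hD d hd) (hD c (hC.1 hcC)))).trans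
    (by linarith)⟩

lemma covN_sub_self_le {P D : Set (X → ℝ)} (hPne : P.Nonempty) {A B : ℝ}
    (hP : ∀ p ∈ P, ∀ x, |p x| ≤ A) (hD : ∀ d ∈ D, ∀ x, |d x| ≤ B) (γ : ℝ) :
    covN μ (P - P) D (2 * γ) ≤ covN μ P D γ :=
  le_iInf₂ fun C hC => iInf₂_le C (hC.sub_self μ hPne hP hD)

lemma exists_finset_isCover_card_eq {F G : Set (X → ℝ)} {γ : ℝ} (h : covN μ F G γ ≠ ⊤) :
    ∃ C : Finset (X → ℝ), IsCover μ F G γ C ∧ (C.card : ℕ∞) = covN μ F G γ := by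
  simp only [covN, ne_eq, iInf_eq_top, Set.encard_eq_top_iff, not_forall, Set.not_infinite] at h
  obtain ⟨C', hC'cov, hC'fin⟩ := h
  have : Nonempty {C // IsCover μ F G γ C} := ⟨⟨C', hC'cov⟩⟩
  obtain ⟨C, hC⟩ := ENat.exists_eq_iInf fun C : {C // IsCover μ F G γ C} => C.1.encard
  have hCeq : C.1.encard = covN μ F G γ := by
    rw [hC, covN, iInf_subtype']
  have hfin : C.1.Finite := Set.encard_lt_top_iff.1 (hCeq ▸ (iInf₂_le C' hC'cov).trans_lt
    (Set.encard_lt_top_iff.2 hC'fin))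
  exact ⟨hfin.toFinset, by simpa using C.2, by rw [← hCeq, hfin.encard_eq_coe_toFinset_card]⟩

end DualNorm

section Learner

variable {X : Type*} (μ : PMF X)

def outcomeMul (d : X → ℝ) (xo : X × Bool) : ℝ := if xo.2 then d xo.1 else 0

lemma outcomeMul_mem_Icc {d : X → ℝ} (hd : Dist1 d) (xo : X × Bool) :
    outcomeMul d xo ∈ Set.Icc (-1) 1 := by
  unfold outcomeMul
  split_ifs
  exacts [hd xo.1, ⟨by norm_num, by norm_num⟩]

lemma pexp_exDist_outcomeMul {p d : X → ℝ} (hp : Predictor p) (hd : Dist1 d) :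
    pexp (exDist μ p) (outcomeMul d) = inn μ p d := by
  have hb : ∀ xo, |outcomeMul d xo| ≤ 1 := fun xo => abs_le.2 (outcomeMul_mem_Icc hd xo)
  rw [exDist, pexp_bind μ _ hb]
  congr 1
  funext x
  rw [pexp_map _ _ hb, pexp, tsum_bool]
  simp [outcomeMul, bern, PMF.bernoulli_apply, min_eq_left (Real.toNNReal_le_one.2 (hp x).2),
    Real.coe_toNNReal _ (hp x).1]

def empInn {n : ℕ} (d : X → ℝ) (s : Fin n → X × Bool) : ℝ :=
  (n : ℝ)⁻¹ * ∑ i, outcomeMul d (s i)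

lemma prob_exists_le_abs_empInn_sub_le (C : Finset (X → ℝ)) (hC : ∀ c ∈ C, Dist1 c)
    {pstar : X → ℝ} (hpstar : Predictor pstar) {η : ℝ} (hη : 0 ≤ η) {n : ℕ} (hn : 0 < n) :
    prob (iid (exDist μ pstar) n) {s | ∃ c ∈ C, η ≤ |empInn c s - inn μ pstar c|} ≤
      C.card * (2 * ENNReal.ofReal (Real.exp (-(n * η ^ 2) / 2))) := by
  set q := exDist μ pstar
  have hsub : {s : Fin n → X × Bool | ∃ c ∈ C, η ≤ |empInn c s - inn μ pstar c|} ⊆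
      ⋃ c ∈ C, {s | n * η ≤ |∑ i, outcomeMul c (s i) - n * pexp q (outcomeMul c)|} := by
    rintro s ⟨c, hc, hs⟩
    refine Set.mem_biUnion hc ?_
    have hn0 : (n : ℝ) ≠ 0 := by positivity
    rw [Set.mem_ofPred_eq, pexp_exDist_outcomeMul μ hpstar (hC c hc),
      show ∑ i, outcomeMul c (s i) - n * inn μ pstar c = n * (empInn c s - inn μ pstar c) by
        rw [empInn, mul_sub, ← mul_assoc, mul_inv_cancel₀ hn0, one_mul],
      abs_mul, Nat.abs_cast]
    exact mul_le_mul_of_nonneg_left hs (Nat.cast_nonneg n)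
  calc _ ≤ _ := prob_mono _ hsub
    _ ≤ _ := prob_biUnion_finset_le _ C _
    _ ≤ ∑ _c ∈ C, 2 * ENNReal.ofReal (Real.exp (-(n * η ^ 2) / 2)) := by
      refine Finset.sum_le_sum fun c hc => ?_
      refine (prob_iid_abs_sum_sub_ge_le q (outcomeMul_mem_Icc (hC c hc)) (by norm_num) hη
        n).trans_eq ?_
      congr 3
      ring
    _ = _ := by rw [Finset.sum_const, nsmul_eq_mul]

def coverScore (C : Finset (X → ℝ)) (hC : C.Nonempty) (e : (X → ℝ) → ℝ) (p : X → ℝ) : ℝ :=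
  C.sup' hC fun c => |inn μ p c - e c|

lemma coverScore_nonneg (C : Finset (X → ℝ)) (hC : C.Nonempty) (e : (X → ℝ) → ℝ)
    (p : X → ℝ) : 0 ≤ coverScore μ C hC e p :=
  let ⟨_, hc⟩ := hC
  (abs_nonneg _).trans (Finset.le_sup' (fun c => |inn μ p c - e c|) hc)

lemma dnorm_sub_le_of_coverScore_le {P D : Set (X → ℝ)} (hP : ∀ p ∈ P, Predictor p)
    (hD : ∀ d ∈ D, Dist1 d) (hDne : D.Nonempty) {C : Finset (X → ℝ)} (hCne : C.Nonempty)
    {γ : ℝ} (hC : IsCover μ (P - P) D γ C) {pstar : X → ℝ} (hpstar : Predictor pstar)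
    {e : (X → ℝ) → ℝ} {η : ℝ} (he : ∀ c ∈ C, |e c - inn μ pstar c| ≤ η) {p p' : X → ℝ}
    (hp : p ∈ P) (hp' : p' ∈ P) {ξ : ℝ}
    (hscore : coverScore μ C hCne e p ≤ coverScore μ C hCne e p' + ξ) :
    dnorm μ D (p - pstar) ≤ 3 * dnorm μ D (p' - pstar) + 2 * η + ξ + γ := by
  have hPb : ∀ p ∈ P, ∀ x, |p x| ≤ 1 := fun p hp => (hP p hp).abs_le_one
  have hDb : ∀ d ∈ D, ∀ x, |d x| ≤ 1 := fun d hd => (hD d hd).abs_le_one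
  have hopt : ∀ g ∈ D, |inn μ p' g - inn μ pstar g| ≤ dnorm μ D (p' - pstar) :=
    fun g hg => abs_inn_sub_inn_le_dnorm μ (hPb p' hp') hpstar.abs_le_one hDb hg
  have hscore' : coverScore μ C hCne e p' ≤ dnorm μ D (p' - pstar) + η := by
    refine Finset.sup'_le _ _ fun c hc => ?_
    have h1 := abs_le.1 (hopt c (hC.1 hc))
    have h2 := abs_le.1 (he c hc)
    exact abs_le.2 ⟨by linarith, by linarith⟩
  refine dnorm_le μ hDne fun d hd => ?_
  obtain ⟨c, hcC, hdc⟩ := hC.2 d hd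
  have h1 := abs_le.1 ((abs_inn_sub_inn_sub_le_dnorm_sub μ hPb hp hp' (hDb d hd)
    (hDb c (hC.1 hcC))).trans hdc)
  have h2 := abs_le.1 ((Finset.le_sup' (fun c => |inn μ p c - e c|) hcC).trans hscore)
  have h3 := abs_le.1 (he c hcC)
  have h4 := abs_le.1 (hopt c (hC.1 hcC))
  have h5 := abs_le.1 (hopt d hd)
  rw [inn_sub_left μ (.of_abs_le (hPb p hp)) (.of_abs_le hpstar.abs_le_one)
    (.of_abs_le (hDb d hd)), abs_le]
  constructor <;> linarith

theorem exists_learner_dnorm_le {P D : Set (X → ℝ)} (hPne : P.Nonempty)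
    (hP : ∀ p ∈ P, Predictor p) (hD : ∀ d ∈ D, Dist1 d) (hDne : D.Nonempty)
    {C : Finset (X → ℝ)} (hCne : C.Nonempty) {γ : ℝ} (hC : IsCover μ (P - P) D γ C)
    {n : ℕ} (hn : 0 < n) {η ξ δ : ℝ} (hη : 0 ≤ η) (hξ : 0 < ξ)
    (hδ : C.card * (2 * Real.exp (-(n * η ^ 2) / 2)) ≤ δ) :
    ∃ A : Learner X n, ∀ pstar, Predictor pstar → ∀ p' ∈ P,
      ENNReal.ofReal (1 - δ) ≤ prob (outDist μ pstar A)
        {p | p ∈ P ∧ dnorm μ D (p - pstar) ≤ 3 * dnorm μ D (p' - pstar) + 2 * η + ξ + γ} := by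
  set score := fun s : Fin n → X × Bool => coverScore μ C hCne fun c => empInn c s
  have hmin : ∀ s, ∃ p ∈ P, ∀ p' ∈ P, score s p ≤ score s p' + ξ := fun s => by
    have hbdd : BddBelow (score s '' P) :=
      ⟨0, Set.forall_mem_image.2 fun q _ => coverScore_nonneg μ C hCne _ q⟩
    obtain ⟨_, ⟨p, hp, rfl⟩, hlt⟩ := Real.lt_sInf_add_pos (hPne.image (score s)) hξ
    exact ⟨p, hp, fun p' hp' => hlt.le.trans (add_le_add (csInf_le hbdd ⟨p', hp', rfl⟩) le_rfl)⟩
  choose pick hpickP hpick using hmin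
  refine ⟨fun s => PMF.pure (pick s), fun pstar hpstar p' hp' => ?_⟩
  have hCD : ∀ c ∈ C, Dist1 c := fun c hc => hD c (hC.1 hc)
  have hδ0 : 0 ≤ δ := le_trans (by positivity) hδ
  set good := {s : Fin n → X × Bool | ∀ c ∈ C, |empInn c s - inn μ pstar c| < η}
  have hbad : prob (iid (exDist μ pstar) n) goodᶜ ≤ ENNReal.ofReal δ := by
    have hcompl : goodᶜ = {s | ∃ c ∈ C, η ≤ |empInn c s - inn μ pstar c|} := by
      ext s; simp [good]
    rw [hcompl]
    refine (prob_exists_le_abs_empInn_sub_le μ C hCD hpstar hη hn).trans (le_of_eq_of_le ?_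
      (ENNReal.ofReal_le_ofReal hδ))
    rw [ENNReal.ofReal_mul (Nat.cast_nonneg _), ENNReal.ofReal_mul zero_le_two,
      ENNReal.ofReal_natCast, ENNReal.ofReal_ofNat]
  refine (ofReal_one_sub_le_prob _ hδ0 hbad).trans ?_
  change _ ≤ prob ((iid (exDist μ pstar) n).map pick) _
  rw [prob_map]
  refine prob_mono _ fun s hs => ⟨hpickP s, ?_⟩
  exact dnorm_sub_le_of_coverScore_le μ hP hD hDne hCne hC hpstar
    (fun c hc => (hs c hc).le) (hpickP s) hp' (hpick s p' hp')

end Learner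

lemma exists_sampleSize {N : ℕ} (hN : 0 < N) {ε δ : ℝ} (hε : ε ∈ Set.Ioo (0 : ℝ) 1)
    (hδ : δ ∈ Set.Ioo (0 : ℝ) 1) :
    ∃ n : ℕ, 0 < n ∧ (n : ℝ) ≤ 256 * ε⁻¹ ^ 2 * (Real.logb 2 N + Real.logb 2 (2 / δ)) ∧
      N * (2 * Real.exp (-(n * (ε / 8) ^ 2) / 2)) ≤ δ := by
  obtain ⟨hε0, hε1⟩ := hε
  obtain ⟨hδ0, hδ1⟩ := hδ
  set L := Real.logb 2 N + Real.logb 2 (2 / δ)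
  have hN1 : (1 : ℝ) ≤ N := by exact_mod_cast hN
  have hL1 : 1 ≤ L := by
    have h2 : Real.logb 2 2 ≤ Real.logb 2 (2 / δ) :=
      Real.logb_le_logb_of_le one_lt_two two_pos (by rw [le_div_iff₀ hδ0]; linarith)
    rw [Real.logb_self_eq_one one_lt_two] at h2
    linarith [Real.logb_nonneg one_lt_two hN1]
  have hlog : Real.log (2 * N / δ) ≤ L := by
    have hL : Real.logb 2 (2 * N / δ) = L := by
      rw [show 2 * (N : ℝ) / δ = N * (2 / δ) by ring, Real.logb_mul (by positivity) (by positivity)]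
    rw [← hL, Real.logb, le_div_iff₀ (Real.log_pos one_lt_two)]
    have : 0 ≤ Real.log (2 * N / δ) :=
      Real.log_nonneg (by rw [le_div_iff₀ hδ0]; nlinarith)
    nlinarith [Real.log_two_lt_d9]
  have hεinv : 1 ≤ ε⁻¹ ^ 2 := one_le_pow₀ ((one_le_inv₀ hε0).2 hε1.le)
  set x := 128 * ε⁻¹ ^ 2 * L
  have hx : 1 ≤ x := by nlinarith
  have hxn : x ≤ ⌈x⌉₊ := Nat.le_ceil x
  refine ⟨⌈x⌉₊, Nat.ceil_pos.2 (by linarith), ?_, ?_⟩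
  · linarith [Nat.ceil_lt_add_one (by linarith : 0 ≤ x)]
  · have hexp : Real.log (2 * N / δ) ≤ ⌈x⌉₊ * (ε / 8) ^ 2 / 2 := by
      have : x * (ε / 8) ^ 2 / 2 = L := by
        simp only [x]
        field_simp
        ring
      nlinarith [mul_le_mul_of_nonneg_right hxn (by positivity : (0 : ℝ) ≤ (ε / 8) ^ 2 / 2)]
    have htail : Real.exp (-(⌈x⌉₊ * (ε / 8) ^ 2) / 2) ≤ δ / (2 * N) := by
      calc _ ≤ Real.exp (-Real.log (2 * N / δ)) := Real.exp_le_exp.2 (by linarith)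
        _ = δ / (2 * N) := by rw [Real.exp_neg, Real.exp_log (by positivity), inv_div]
    calc _ ≤ (N : ℝ) * (2 * (δ / (2 * N))) := by gcongr
      _ = δ := by field_simp

end OI

/-- sample complexity upper bound via covering the distinguisher class
(Algorithm "Distinguisher Covering"): there is a learner using
`n = O(ε⁻²(log N_{μ,Q}(D,ε/2) + log(2/δ))) ≤ O(ε⁻²(log N_{μ,P}(D,ε/4) + log(2/δ)))` samples
(where `Q = P − P`) that, for every target predictor `p*`, outputs `p ∈ P` with
`‖p − p*‖_{μ,D} ≤ 3·inf_{p'∈P}‖p' − p*‖_{μ,D} + ε` with probability at least `1 − δ`. -/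
theorem statement_3 :
    ∃ c : ℝ, 0 < c ∧
      ∀ (X : Type) (_ : Nonempty X) (μ : PMF X) (P D : Set (X → ℝ)),
        P.Nonempty → (∀ p ∈ P, Predictor p) →
        D.Nonempty → (∀ d ∈ D, Dist1 d) →
        ∀ ε δ : ℝ, ε ∈ Set.Ioo (0 : ℝ) 1 → δ ∈ Set.Ioo (0 : ℝ) 1 →
          covN μ (P - P) D (ε / 2) ≤ covN μ P D (ε / 4) ∧
          (covN μ (P - P) D (ε / 2) ≠ ⊤ →
            ∃ n : ℕ, 0 < n ∧
              (n : ℝ) ≤ c * ε⁻¹ ^ 2 *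
                (elog2 (covN μ (P - P) D (ε / 2)) + Real.logb 2 (2 / δ)) ∧
              ∃ A : Learner X n, ∀ pstar : X → ℝ, Predictor pstar →
                ENNReal.ofReal (1 - δ) ≤
                  prob (outDist μ pstar A)
                    {p | p ∈ P ∧ dnorm μ D (p - pstar) ≤ 3 * agTarget μ P D pstar + ε}) := by
  refine ⟨256, by norm_num, fun X _ μ P D hPne hP hDne hD ε δ hε hδ => ?_⟩
  have hε0 := hε.1
  have hcovN := covN_sub_self_le μ hPne (fun p hp => (hP p hp).abs_le_one)
    (fun d hd => (hD d hd).abs_le_one) (ε / 4)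
  rw [show 2 * (ε / 4) = ε / 2 by ring] at hcovN
  refine ⟨hcovN, fun hfin => ?_⟩
  obtain ⟨C, hC, hcard⟩ := exists_finset_isCover_card_eq μ hfin
  have hCne : C.Nonempty := by
    obtain ⟨d, hd⟩ := hDne
    obtain ⟨c, hc, -⟩ := hC.2 d hd
    exact ⟨c, hc⟩
  obtain ⟨n, hn, hnle, htail⟩ := exists_sampleSize hCne.card_pos hε hδ
  refine ⟨n, hn, by rwa [← hcard, elog2, ENat.toNat_natCast], ?_⟩
  obtain ⟨A, hA⟩ := exists_learner_dnorm_le μ hPne hP hD hDne hCne hC hn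
    (by positivity : 0 ≤ ε / 8) (by positivity : 0 < ε / 16) htail
  refine ⟨A, fun pstar hpstar => ?_⟩
  obtain ⟨_, ⟨p', hp', rfl⟩, hp'opt⟩ :=
    Real.lt_sInf_add_pos (hPne.image fun p => dnorm μ D (p - pstar)) (by positivity : 0 < ε / 16)
  refine (hA pstar hpstar p' hp').trans (prob_mono _ fun p ⟨hp, hpd⟩ => ⟨hp, ?_⟩)
  rw [agTarget]
  linarith
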